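/- Let v be a non-isolated vertex of a well-covered graph G. Then v is a shedding vertex if and only if G − v is well-covered. -/

import Mathlib

open Finset

/-- A finset of vertices is independent: no two of its members are adjacent. -/
def IndepSet {V : Type*} (G : SimpleGraph V) (A : Finset V) : Prop :=
  ∀ u ∈ A, ∀ v ∈ A, ¬ G.Adj u v

open scoped Classical in
/-- Maximum size of an independent set contained in `s` (independence number of `G[s]`). -/
noncomputable def alphaOn {V : Type*} [Fintype V] (G : SimpleGraph V) (s : Finset V) : ℕ :=
  ((s.powerset).filter (fun A => IndepSet G A)).sup Finset.card

/-- The independence number of `G`. -/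
noncomputable def alpha {V : Type*} [Fintype V] (G : SimpleGraph V) : ℕ :=
  alphaOn G Finset.univ

/-- The induced subgraph `G[s]` is well-covered: every maximal independent subset of `s`
has maximum cardinality. -/
def WellCoveredOn {V : Type*} [Fintype V] (G : SimpleGraph V) (s : Finset V) : Prop :=
  ∀ A ⊆ s, IndepSet G A →
    (∀ B ⊆ s, IndepSet G B → A ⊆ B → A = B) → A.card = alphaOn G s

/-- `G` is well-covered. -/
def WellCovered {V : Type*} [Fintype V] (G : SimpleGraph V) : Prop :=
  WellCoveredOn G Finset.univ

open scoped Classical in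
/-- The open neighborhood `N(A)`: vertices having a neighbor in `A`. -/
noncomputable def nbhd {V : Type*} [Fintype V] (G : SimpleGraph V) (A : Finset V) : Finset V :=
  Finset.univ.filter (fun v => ∃ u ∈ A, G.Adj u v)

/-- The closed neighborhood `N[A] = A ∪ N(A)`. -/
noncomputable def closedNbhd {V : Type*} [Fintype V] [DecidableEq V] (G : SimpleGraph V) (A : Finset V) :
    Finset V :=
  A ∪ nbhd G A

/-- The induced subgraph `G[s]` is in class `W₂`: every two disjoint independent subsets of `s`
extend to two disjoint maximum independent subsets of `s`. -/
def W2On {V : Type*} [Fintype V] (G : SimpleGraph V) (s : Finset V) : Prop :=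
  ∀ A ⊆ s, ∀ B ⊆ s, IndepSet G A → IndepSet G B → Disjoint A B →
    ∃ S₁ ⊆ s, ∃ S₂ ⊆ s, IndepSet G S₁ ∧ IndepSet G S₂ ∧
      S₁.card = alphaOn G s ∧ S₂.card = alphaOn G s ∧ Disjoint S₁ S₂ ∧ A ⊆ S₁ ∧ B ⊆ S₂

/-- `G` belongs to class `W₂`. -/
def W2 {V : Type*} [Fintype V] (G : SimpleGraph V) : Prop :=
  W2On G Finset.univ

/-- v is a shedding vertex of G: every independent set of G - N[v] can be enlarged by a
neighbor of v. -/
def Shedding {V : Type*} [DecidableEq V] (G : SimpleGraph V) (v : V) : Prop :=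
  ∀ S : Finset V, IndepSet G S → (∀ x ∈ S, x ≠ v ∧ ¬ G.Adj v x) →
    ∃ u, G.Adj v u ∧ IndepSet G (insert u S)

/-!
Every maximal independent set `A` of `G - v` either contains a neighbour of `v`, and is then
maximal in `G`, or it does not, and then `A ∪ {v}` is independent in `G`. Since `v` has a
neighbour and `G` is well-covered, `α(G - v) = α(G)`. If `v` is shedding, the second case
cannot occur for a maximal `A`, so all maximal independent sets of `G - v` have size `α(G)`.
Conversely, if `G - v` is well-covered, extend an independent set `S` of `G - N[v]` to a maximal
independent set `B` of `G - v`; it has size `α(G)`, so `B ∪ {v}` is not independent and `B`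
contains a neighbour of `v`, which can be added to `S`.
-/

section IndependentSets

variable {V : Type*} {G : SimpleGraph V}

theorem IndepSet.mono {A B : Finset V} (hB : IndepSet G B) (hAB : A ⊆ B) : IndepSet G A :=
  fun u hu w hw => hB u (hAB hu) w (hAB hw)

theorem IndepSet.insert [DecidableEq V] {B : Finset V} {v : V} (hB : IndepSet G B)
    (hv : ∀ b ∈ B, ¬ G.Adj v b) : IndepSet G (insert v B) := by
  intro a ha b hb
  rcases Finset.mem_insert.mp ha with rfl | haB <;> rcases Finset.mem_insert.mp hb with rfl | hbB
  · exact G.irrefl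
  · exact hv b hbB
  · exact fun h => hv a haB h.symm
  · exact hB a haB b hbB

theorem indepSet_singleton (u : V) : IndepSet G {u} := by
  intro a ha b hb
  rw [Finset.mem_singleton] at ha hb
  subst ha hb
  exact G.irrefl

theorem exists_maximal_indepSet_superset {s A : Finset V} (hA : IndepSet G A) (hAs : A ⊆ s) :
    ∃ B, A ⊆ B ∧ B ⊆ s ∧ IndepSet G B ∧ ∀ C ⊆ s, IndepSet G C → B ⊆ C → B = C := by
  classical
  set T := s.powerset.filter fun B => IndepSet G B ∧ A ⊆ B
  have hAT : A ∈ T := Finset.mem_filter.mpr ⟨Finset.mem_powerset.mpr hAs, hA, subset_rfl⟩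
  obtain ⟨B, hBT, hBmax⟩ := T.exists_max_image Finset.card ⟨A, hAT⟩
  obtain ⟨hBs, hB, hAB⟩ := Finset.mem_filter.mp hBT
  refine ⟨B, hAB, Finset.mem_powerset.mp hBs, hB, fun C hCs hC hBC => ?_⟩
  have hCT : C ∈ T := Finset.mem_filter.mpr ⟨Finset.mem_powerset.mpr hCs, hC, hAB.trans hBC⟩
  exact Finset.eq_of_subset_of_card_le hBC (hBmax C hCT)

variable [Fintype V]

theorem IndepSet.card_le_alphaOn {s A : Finset V} (hA : IndepSet G A) (hAs : A ⊆ s) :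
    A.card ≤ alphaOn G s := by
  classical
  exact Finset.le_sup (f := Finset.card) (Finset.mem_filter.mpr ⟨Finset.mem_powerset.mpr hAs, hA⟩)

theorem alphaOn_mono {s t : Finset V} (hst : s ⊆ t) : alphaOn G s ≤ alphaOn G t := by
  classical
  refine Finset.sup_le fun A hA => ?_
  obtain ⟨hAs, hA⟩ := Finset.mem_filter.mp hA
  exact hA.card_le_alphaOn ((Finset.mem_powerset.mp hAs).trans hst)

end IndependentSets

section DeleteVertex

variable {V : Type*} [Fintype V] [DecidableEq V] {G : SimpleGraph V} {v : V}

theorem subset_erase_of_forall_ne {A : Finset V} (h : ∀ x ∈ A, x ≠ v) :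
    A ⊆ Finset.univ.erase v :=
  fun x hx => Finset.mem_erase.mpr ⟨h x hx, Finset.mem_univ x⟩

theorem alphaOn_erase_eq_alpha (hwc : WellCovered G) {u : V} (hvu : G.Adj v u) :
    alphaOn G (Finset.univ.erase v) = alpha G := by
  refine le_antisymm (alphaOn_mono (Finset.subset_univ _)) ?_
  obtain ⟨B, huB, -, hB, hBmax⟩ :=
    exists_maximal_indepSet_superset (indepSet_singleton u) (Finset.subset_univ {u})
  have hBv : B ⊆ Finset.univ.erase v := subset_erase_of_forall_ne fun x hx hxv =>
    hB u (huB (Finset.mem_singleton_self u)) x hx (hxv ▸ hvu.symm)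
  calc alpha G = B.card := (hwc B (Finset.subset_univ B) hB hBmax).symm
    _ ≤ _ := hB.card_le_alphaOn hBv

theorem maximal_of_maximal_erase_of_adj {A : Finset V} {w : V} (hwA : w ∈ A) (hvw : G.Adj v w)
    (hAmax : ∀ B ⊆ Finset.univ.erase v, IndepSet G B → A ⊆ B → A = B) :
    ∀ B ⊆ Finset.univ, IndepSet G B → A ⊆ B → A = B :=
  fun B _ hB hAB => hAmax B (subset_erase_of_forall_ne fun x hx hxv =>
    hB w (hAB hwA) x hx (hxv ▸ hvw.symm)) hB hAB

theorem exists_adj_of_card_eq_alpha {B : Finset V} (hB : IndepSet G B)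
    (hBv : B ⊆ Finset.univ.erase v) (hcard : B.card = alpha G) : ∃ u ∈ B, G.Adj v u := by
  by_contra! hno
  have hvB : v ∉ B := fun h => (Finset.mem_erase.mp (hBv h)).1 rfl
  have hle := (hB.insert hno).card_le_alphaOn (Finset.subset_univ _)
  rw [Finset.card_insert_of_notMem hvB, hcard] at hle
  exact (Nat.lt_succ_self _).not_ge hle

theorem wellCoveredOn_erase_of_shedding (hwc : WellCovered G) {u : V} (hvu : G.Adj v u)
    (hshed : Shedding G v) : WellCoveredOn G (Finset.univ.erase v) := by
  intro A hAs hA hAmax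
  rw [alphaOn_erase_eq_alpha hwc hvu]
  by_cases hadj : ∃ w ∈ A, G.Adj v w
  · obtain ⟨w, hwA, hvw⟩ := hadj
    exact hwc A (Finset.subset_univ A) hA (maximal_of_maximal_erase_of_adj hwA hvw hAmax)
  push Not at hadj
  exfalso
  obtain ⟨w, hvw, hwA⟩ :=
    hshed A hA fun x hx => ⟨(Finset.mem_erase.mp (hAs hx)).1, hadj x hx⟩
  have hwv : w ≠ v := fun h => G.irrefl (h ▸ hvw)
  have hA_eq := hAmax (insert w A)
    (Finset.insert_subset (Finset.mem_erase.mpr ⟨hwv, Finset.mem_univ w⟩) hAs) hwA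
    (Finset.subset_insert w A)
  exact hadj w (hA_eq ▸ Finset.mem_insert_self w A) hvw

theorem shedding_of_wellCoveredOn_erase (hwc : WellCovered G) {u : V} (hvu : G.Adj v u)
    (hwcv : WellCoveredOn G (Finset.univ.erase v)) : Shedding G v := by
  intro S hS hSv
  obtain ⟨B, hSB, hBv, hB, hBmax⟩ :=
    exists_maximal_indepSet_superset hS (subset_erase_of_forall_ne fun x hx => (hSv x hx).1)
  have hcard : B.card = alpha G := by
    rw [← alphaOn_erase_eq_alpha hwc hvu]
    exact hwcv B hBv hB hBmax
  obtain ⟨w, hwB, hvw⟩ := exists_adj_of_card_eq_alpha hB hBv hcard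
  exact ⟨w, hvw, hB.mono (Finset.insert_subset hwB hSB)⟩

end DeleteVertex

/-- In a well-covered graph, a non-isolated vertex v is shedding iff G - v is
well-covered. -/
theorem stmt16 {V : Type*} [Fintype V] [DecidableEq V] (G : SimpleGraph V)
    (hwc : WellCovered G) (v : V) (hv : ∃ u, G.Adj v u) :
    Shedding G v ↔ WellCoveredOn G (Finset.univ.erase v) := by
  obtain ⟨u, hvu⟩ := hv
  exact ⟨wellCoveredOn_erase_of_shedding hwc hvu, shedding_of_wellCoveredOn_erase hwc hvu⟩
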